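/- Let f : ℝⁿ → ℝᵈ be a linear map satisfying the condition that f(x) ≠ 0 whenever x ≠ 0, and let v ∈ ℝᵈ. Let x₁, x₂ ∈ ℝⁿ be linearly independent vectors, and set x = x₁ + x₂. If cos(f(x₁), v) = 1 (i.e., f(x₁) aligns perfectly with v) and cos(f(x₂), v) < 1, then cos(f(x), v) < 1. -/

import Mathlib

theorem stmt0 {n d : ℕ}
    (f : EuclideanSpace ℝ (Fin n) →ₗ[ℝ] EuclideanSpace ℝ (Fin d))
    (hf : ∀ x : EuclideanSpace ℝ (Fin n), x ≠ 0 → f x ≠ 0)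
    (v : EuclideanSpace ℝ (Fin d))
    (x₁ x₂ : EuclideanSpace ℝ (Fin n))
    (hli : LinearIndependent ℝ ![x₁, x₂])
    (h1 : inner ℝ (f x₁) v / (‖f x₁‖ * ‖v‖) = (1 : ℝ))
    (h2 : inner ℝ (f x₂) v / (‖f x₂‖ * ‖v‖) < (1 : ℝ)) :
    inner ℝ (f (x₁ + x₂)) v / (‖f (x₁ + x₂)‖ * ‖v‖) < (1 : ℝ) := by
  have hker : LinearMap.ker f = ⊥ := LinearMap.ker_eq_bot'.2 fun x hx => by
    by_contra h; exact hf x h hx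
  have hli' : LinearIndependent ℝ ![f x₁, f x₂] := by
    have := hli.map' f hker
    convert this using 1
    ext i
    fin_cases i <;> simp
    rfl
  refine lt_of_le_of_ne (le_of_abs_le (abs_real_inner_div_norm_mul_norm_le_one _ _)) ?_
  intro heq
  obtain ⟨hx1ne, r, hr, hv1⟩ := (real_inner_div_norm_mul_norm_eq_one_iff _ _).1 h1
  obtain ⟨hxne, s, hs, hvs⟩ := (real_inner_div_norm_mul_norm_eq_one_iff _ _).1 heq
  -- v = r • f x₁ = s • f (x₁ + x₂) = s • (f x₁ + f x₂)
  have hmap : (f (x₁ + x₂) : EuclideanSpace ℝ (Fin d)) = f x₁ + f x₂ := map_add f x₁ x₂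
  have key : s • f x₂ = (r - s) • f x₁ := by
    have h : r • f x₁ = s • f x₁ + s • f x₂ := by
      rw [← smul_add, ← hmap, ← hvs, hv1]
    rw [sub_smul, eq_sub_iff_add_eq, add_comm, h]
  have hsum : (r - s) • f x₁ + (-s) • f x₂ = 0 := by
    rw [neg_smul, ← key]; abel
  have := (LinearIndependent.pair_iff.1 hli' (r - s) (-s) hsum).2
  exact hs.ne' (by linarith [neg_eq_zero.1 this])
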